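/- The following are equivalent for x ∈ ℝⁿ: (A1) x minimizes f; (A2) x = p(x); (A3) ∇f_φ(x) = 0; (A4) x minimizes f_φ; (A5) f(x) = f(p(x)); (A6) f(x) = f_φ(x). -/

import Mathlib

open Set Filter Topology RealInnerProductSpace

/-- A φ-regular function on ℝⁿ, together with its partial gradients `Dz`, `Dx`,
strong-convexity modulus `β` and Lipschitz constant `L` for `∇φ`. -/
structure PhiRegular (n : ℕ) where
  φ : EuclideanSpace ℝ (Fin n) → EuclideanSpace ℝ (Fin n) → ℝ
  Dz : EuclideanSpace ℝ (Fin n) → EuclideanSpace ℝ (Fin n) → EuclideanSpace ℝ (Fin n)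
  Dx : EuclideanSpace ℝ (Fin n) → EuclideanSpace ℝ (Fin n) → EuclideanSpace ℝ (Fin n)
  β : ℝ
  L : ℝ
  β_pos : 0 < β
  L_pos : 0 < L
  contDiff : ContDiff ℝ 1 (fun p : EuclideanSpace ℝ (Fin n) × EuclideanSpace ℝ (Fin n) => φ p.1 p.2)
  gradZ : ∀ z x, HasGradientAt (fun z' => φ z' x) (Dz z x) z
  gradX : ∀ z x, HasGradientAt (fun x' => φ z x') (Dx z x) x
  nonneg : ∀ z x, 0 ≤ φ z x
  eq_zero_iff : ∀ z x, φ z x = 0 ↔ z = x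
  strong : ∀ z' z x' x, φ z x + ⟪Dz z x, z' - z⟫ + ⟪Dx z x, x' - x⟫
      + β * ‖(z' - z) - (x' - x)‖ ^ 2 ≤ φ z' x'
  lip : ∀ z' z x' x, ‖Dz z' x' - Dz z x‖ ^ 2 + ‖Dx z' x' - Dx z x‖ ^ 2
      ≤ L ^ 2 * ‖(z' - z) - (x' - x)‖ ^ 2
  skew : ∀ z x, Dz z x = - Dx z x

/-! Every condition is compared with (A2), `p x = x`. Since `φ ≥ 0` vanishes exactly on the
diagonal, minimality of `p x` turns (A4) and (A5) into `φ (p x) x ≤ 0`, i.e. (A2); strong convexity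
of `φ` does the same for (A3). For (A6) ⇒ (A1): `x` then minimizes `f + φ(·, x) / λ`, and a convex
function is minimized wherever it is minimized after adding a term that is flat there. -/

/-- If `f y < f x`, convexity makes `f` drop at a linear rate along the segment from `x` to `y`,
while `g` only changes sublinearly. -/
theorem ConvexOn.le_of_forall_le_add_of_hasFDerivAt_zero {E : Type*} [NormedAddCommGroup E]
    [NormedSpace ℝ E] {f g : E → ℝ} {x : E} (hf : ConvexOn ℝ univ f)
    (hg : HasFDerivAt g (0 : E →L[ℝ] ℝ) x) (h : ∀ y, f x + g x ≤ f y + g y) (y : E) :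
    f x ≤ f y := by
  have hline : HasDerivAt (fun t : ℝ => g (x + t • (y - x))) 0 0 := by
    have hpath : HasDerivAt (fun t : ℝ => x + t • (y - x)) (y - x) 0 := by
      simpa using ((hasDerivAt_id (0 : ℝ)).smul_const (y - x)).const_add x
    simpa [Function.comp_def] using hg.comp_hasDerivAt_of_eq (0 : ℝ) hpath (by simp)
  have hslope := hline.tendsto_slope_zero_right
  simp only [zero_add, zero_smul, add_zero, smul_eq_mul] at hslope
  have hbound : ∀ t ∈ Ioc (0 : ℝ) 1, f x - f y ≤ t⁻¹ * (g (x + t • (y - x)) - g x) := by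
    rintro t ⟨ht0, ht1⟩
    have hconv : f (x + t • (y - x)) ≤ (1 - t) * f x + t * f y := by
      rw [show x + t • (y - x) = (1 - t) • x + t • y by module]
      exact hf.2 (mem_univ x) (mem_univ y) (sub_nonneg.2 ht1) ht0.le (by ring)
    rw [le_inv_mul_iff₀ ht0]
    linarith [h (x + t • (y - x))]
  have hnear : ∀ᶠ t in 𝓝[>] (0 : ℝ), t ∈ Ioc (0 : ℝ) 1 := Ioc_mem_nhdsGT one_pos
  exact sub_nonpos.1 (ge_of_tendsto hslope (hnear.mono hbound))

namespace PhiRegular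

variable {n : ℕ} (R : PhiRegular n)

theorem φ_self (x : EuclideanSpace ℝ (Fin n)) : R.φ x x = 0 :=
  (R.eq_zero_iff x x).2 rfl

theorem eq_of_φ_nonpos {z x : EuclideanSpace ℝ (Fin n)} (h : R.φ z x ≤ 0) : z = x :=
  (R.eq_zero_iff z x).1 (le_antisymm h (R.nonneg z x))

theorem Dz_self (x : EuclideanSpace ℝ (Fin n)) : R.Dz x x = 0 := by
  have hmin : IsLocalMin (fun z => R.φ z x) x :=
    Eventually.of_forall fun z => (R.φ_self x).trans_le (R.nonneg z x)
  simpa using hmin.hasFDerivAt_eq_zero (R.gradZ x x).hasFDerivAt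

theorem Dx_self (x : EuclideanSpace ℝ (Fin n)) : R.Dx x x = 0 := by
  simpa [R.skew] using R.Dz_self x

theorem hasFDerivAt_φ_self (x : EuclideanSpace ℝ (Fin n)) :
    HasFDerivAt (fun z => R.φ z x) (0 : EuclideanSpace ℝ (Fin n) →L[ℝ] ℝ) x := by
  simpa [R.Dz_self] using (R.gradZ x x).hasFDerivAt

theorem eq_of_Dx_eq_zero {z x : EuclideanSpace ℝ (Fin n)} (h : R.Dx z x = 0) : z = x := by
  refine R.eq_of_φ_nonpos ?_
  have hs := R.strong x z x x
  simp only [R.skew, h, neg_zero, inner_zero_left, sub_self, add_zero, sub_zero, R.φ_self] at hs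
  nlinarith [R.β_pos, sq_nonneg ‖x - z‖]

end PhiRegular

/-- Proposition 2: the statements (A1)–(A6) are equivalent. -/
theorem optimality_tfae (n : ℕ) (R : PhiRegular n)
    (f : EuclideanSpace ℝ (Fin n) → ℝ) (hf : ConvexOn ℝ univ f)
    (lam : ℝ) (hlam : 0 < lam)
    (p : EuclideanSpace ℝ (Fin n) → EuclideanSpace ℝ (Fin n))
    (hp : ∀ x z, f (p x) + (1 / lam) * R.φ (p x) x ≤ f z + (1 / lam) * R.φ z x)
    (fphi : EuclideanSpace ℝ (Fin n) → ℝ)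
    (hfphi : ∀ x, fphi x = f (p x) + (1 / lam) * R.φ (p x) x)
    (x : EuclideanSpace ℝ (Fin n)) :
    [(∀ z, f x ≤ f z),                       -- (A1) x minimizes f
     x = p x,                                 -- (A2)
     (1 / lam) • R.Dx (p x) x = 0,            -- (A3) ∇f_φ(x) = 0
     (∀ y, fphi x ≤ fphi y),                  -- (A4) x minimizes f_φ
     f x = f (p x),                           -- (A5)
     f x = fphi x].TFAE := by                 -- (A6)
  have hc : 0 < 1 / lam := by positivity
  have hfphi_le : ∀ y, fphi y ≤ f y := fun y => by simpa [hfphi, R.φ_self] using hp y y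
  tfae_have 1 → 4 := fun h1 y => by
    rw [hfphi y]
    exact (hfphi_le x).trans ((h1 (p y)).trans
      (le_add_of_nonneg_right (mul_nonneg hc.le (R.nonneg _ _))))
  tfae_have 4 → 2 := fun h4 => by
    have := (h4 (p x)).trans (hfphi_le (p x))
    rw [hfphi] at this
    exact (R.eq_of_φ_nonpos (nonpos_of_mul_nonpos_right (by linarith) hc)).symm
  tfae_have 2 → 6 := fun h2 => by rw [hfphi, ← h2, R.φ_self, mul_zero, add_zero]
  tfae_have 6 → 1 := fun h6 => by
    refine hf.le_of_forall_le_add_of_hasFDerivAt_zero (g := fun z => 1 / lam * R.φ z x) ?_ ?_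
    · simpa using (R.hasFDerivAt_φ_self x).const_mul (1 / lam)
    · simpa [R.φ_self, h6, hfphi] using hp x
  tfae_have 2 → 5 := congrArg f
  tfae_have 5 → 2 := fun h5 => by
    have := hp x x
    rw [R.φ_self, ← h5] at this
    exact (R.eq_of_φ_nonpos (nonpos_of_mul_nonpos_right (by linarith) hc)).symm
  tfae_have 2 → 3 := fun h2 => by rw [← h2, R.Dx_self, smul_zero]
  tfae_have 3 → 2 := fun h3 =>
    (R.eq_of_Dx_eq_zero ((smul_eq_zero_iff_right hc.ne').1 h3)).symm
  tfae_finish
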